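/- Volkov exponent equivalence: let K₁,…,Kₙ be null complex 4-vectors (Kᵢ·Kᵢ = 0) such that the total sum Σᵢ Kᵢ has vanishing +, z and z̃ lightfront components (3-momentum conservation transverse to a null direction n). Set 𝕂 := Σ_{i≠n} Kᵢ (omitting the last vector). Then 𝕂·𝕂 / (2 𝕂₊) = Σᵢ Kᵢ₋, provided 𝕂₊ ≠ 0, where v₊ and v₋ denote the lightfront components of a vector v. -/

import Mathlib

/-!
Write `L` for the omitted vector, so that `𝕂₊ = -L₊`, `𝕂_z = -L_z`, `𝕂_z̃ = -L_z̃`.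
Since `𝕂·𝕂 = 2(𝕂₊𝕂₋ - 𝕂_z𝕂_z̃)` and `L` is null, `𝕂_z𝕂_z̃ = L_z L_z̃ = L₊L₋ = -𝕂₊L₋`,
hence `𝕂·𝕂 = 2𝕂₊(𝕂₋ + L₋)`.
-/

/-- Lightfront Minkowski pairing on components (v₊, v₋, v_z, v_z̃) indexed 0, 1, 2, 3:
v·w = v₊w₋ + v₋w₊ − v_z w_z̃ − v_z̃ w_z. -/
def ldot (p q : Fin 4 → ℂ) : ℂ := p 0 * q 1 + p 1 * q 0 - p 2 * q 3 - p 3 * q 2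

lemma ldot_self (p : Fin 4 → ℂ) : ldot p p = 2 * (p 0 * p 1 - p 2 * p 3) := by
  unfold ldot
  ring

lemma ldot_self_eq_of_null_of_add_eq_zero {p q : Fin 4 → ℂ} (hq : ldot q q = 0)
    (h0 : p 0 + q 0 = 0) (h2 : p 2 + q 2 = 0) (h3 : p 3 + q 3 = 0) :
    ldot p p = 2 * p 0 * (p 1 + q 1) := by
  rw [ldot_self] at hq ⊢
  linear_combination hq - 2 * q 1 * h0 - 2 * p 3 * h2 + 2 * q 2 * h3

lemma ldot_self_div_eq_of_null_of_add_eq_zero {p q : Fin 4 → ℂ} (hq : ldot q q = 0)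
    (h0 : p 0 + q 0 = 0) (h2 : p 2 + q 2 = 0) (h3 : p 3 + q 3 = 0) (hp : p 0 ≠ 0) :
    ldot p p / (2 * p 0) = p 1 + q 1 := by
  rw [ldot_self_eq_of_null_of_add_eq_zero hq h0 h2 h3]
  field_simp

lemma Fin.sum_univ_apply_eq_sum_castSucc_add_last {n : ℕ} {ι M : Type*} [AddCommMonoid M]
    (K : Fin (n + 1) → ι → M) (j : ι) :
    ∑ i, K i j = (∑ i : Fin n, K i.castSucc) j + K (Fin.last n) j := by
  rw [Fin.sum_univ_castSucc, Finset.sum_apply]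

/-- Volkov exponent equivalence: for null vectors K₁,…,K_{n+1} whose total sum has
vanishing +, z and z̃ lightfront components, and 𝕂 the sum omitting the last vector with
𝕂₊ ≠ 0, one has 𝕂·𝕂/(2𝕂₊) = Σᵢ Kᵢ₋. -/
theorem volkov_exponent_equivalence (n : ℕ) (K : Fin (n + 1) → Fin 4 → ℂ)
    (hnull : ∀ i, ldot (K i) (K i) = 0)
    (hplus : ∑ i, K i 0 = 0) (hz : ∑ i, K i 2 = 0) (hzt : ∑ i, K i 3 = 0)
    (𝕂 : Fin 4 → ℂ) (h𝕂 : 𝕂 = ∑ i : Fin n, K i.castSucc)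
    (h𝕂p : 𝕂 0 ≠ 0) :
    ldot 𝕂 𝕂 / (2 * 𝕂 0) = ∑ i, K i 1 := by
  subst h𝕂
  simp only [Fin.sum_univ_apply_eq_sum_castSucc_add_last K] at hplus hz hzt ⊢
  exact ldot_self_div_eq_of_null_of_add_eq_zero (hnull (Fin.last n)) hplus hz hzt h𝕂p
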